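/- arXiv:2410.03792 — 5 statements merged into one kernel-verified Lean document; each statement's English description precedes it below -/
import Mathlib

section
/- Let h be a polynomial in n variables with integer coefficients, p a prime, and (c_1,...,c_n) an integer tuple such that p^2 divides h(c_1+p·d_1, ..., c_n+p·d_n) for all integer tuples (d_1,...,d_n). Then p divides the partial derivative ∂h/∂x_n evaluated at (c_1,...,c_n). -/
open Polynomial MvPolynomial

private noncomputable def gfun (n : ℕ) (c : Fin (n + 1) → ℤ) : Fin (n + 1) → Polynomial ℤ :=
  fun i => if i = Fin.last n then Polynomial.C (c i) + Polynomial.X else Polynomial.C (c i)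

private lemma evalB (n : ℕ) (c : Fin (n + 1) → ℤ) (s : ℤ) (h : MvPolynomial (Fin (n + 1)) ℤ) :
    Polynomial.eval s (MvPolynomial.aeval (gfun n c) h)
      = MvPolynomial.eval (fun i => Polynomial.eval s (gfun n c i)) h := by
  induction h using MvPolynomial.induction_on with
  | C a => simp
  | add f g hf hg => simp [hf, hg]
  | mul_X f i hf => simp [hf]

private lemma chain (n : ℕ) (c : Fin (n + 1) → ℤ) (h : MvPolynomial (Fin (n + 1)) ℤ) :
    Polynomial.derivative (MvPolynomial.aeval (gfun n c) h)
      = MvPolynomial.aeval (gfun n c) (MvPolynomial.pderiv (Fin.last n) h) := by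
  induction h using MvPolynomial.induction_on with
  | C a => simp
  | add f g hf hg => simp [hf, hg]
  | mul_X f i hf =>
    simp only [map_mul, MvPolynomial.aeval_X, Polynomial.derivative_mul, hf,
      MvPolynomial.pderiv_mul, MvPolynomial.pderiv_X, map_add]
    by_cases hi : i = Fin.last n
    · subst hi
      simp [gfun, Pi.single_eq_same]
    · simp [gfun, hi, Pi.single_eq_of_ne hi]

/-- If `p² ∣ h(c₁+p·d₁, ..., cₙ+p·dₙ)` for all integer tuples `d`, then `p` divides the
partial derivative of `h` with respect to the last variable, evaluated at `c`. -/
theorem stmt_1 (n : ℕ) (h : MvPolynomial (Fin (n + 1)) ℤ) (p : ℕ) (hp : p.Prime)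
    (c : Fin (n + 1) → ℤ)
    (H : ∀ d : Fin (n + 1) → ℤ,
      ((p : ℤ)) ^ 2 ∣ MvPolynomial.eval (fun i => c i + (p : ℤ) * d i) h) :
    (p : ℤ) ∣ MvPolynomial.eval c (MvPolynomial.pderiv (Fin.last n) h) := by
  set r : Polynomial ℤ := MvPolynomial.aeval (gfun n c) h with hr
  -- evaluations of r
  have hre : ∀ s : ℤ, Polynomial.eval ((p : ℤ) * s) r
      = MvPolynomial.eval (fun i => c i + (p : ℤ) * (if i = Fin.last n then s else 0)) h := by
    intro s
    rw [hr, evalB]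
    have : (fun i => Polynomial.eval ((p:ℤ)*s) (gfun n c i))
        = fun i => c i + (p : ℤ) * (if i = Fin.last n then s else 0) := by
      funext i
      by_cases hi : i = Fin.last n <;> simp [gfun, hi]
    rw [this]
  have hdvd : ∀ s : ℤ, (p : ℤ) ^ 2 ∣ Polynomial.eval ((p : ℤ) * s) r := by
    intro s
    rw [hre s]
    exact H _
  -- goal value equals coeff r 1
  have hgoal : MvPolynomial.eval c (MvPolynomial.pderiv (Fin.last n) h) = r.coeff 1 := by
    have h1 : Polynomial.eval 0 (MvPolynomial.aeval (gfun n c) (MvPolynomial.pderiv (Fin.last n) h))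
        = MvPolynomial.eval c (MvPolynomial.pderiv (Fin.last n) h) := by
      rw [evalB]
      have : (fun i => Polynomial.eval (0:ℤ) (gfun n c i)) = c := by
        funext i
        by_cases hi : i = Fin.last n <;> simp [gfun, hi]
      rw [this]
    rw [← h1, ← chain, ← Polynomial.coeff_zero_eq_eval_zero, Polynomial.coeff_derivative]
    simp
    rfl
  -- r.eval p = coeff 0 + p * coeff 1 + p^2 * m
  have h0 : Polynomial.eval (0 : ℤ) r = r.coeff 0 := (Polynomial.coeff_zero_eq_eval_zero r).symm
  have hd0 : (p : ℤ) ^ 2 ∣ r.coeff 0 := by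
    rw [← h0]
    simpa using hdvd 0
  have hdp : (p : ℤ) ^ 2 ∣ Polynomial.eval (p : ℤ) r := by simpa using hdvd 1
  -- expand via divX
  have hsplit : Polynomial.eval (p : ℤ) r
      = (p : ℤ) * Polynomial.eval (p : ℤ) r.divX + r.coeff 0 := by
    conv_lhs => rw [← Polynomial.X_mul_divX_add r]
    simp [mul_comm]
  obtain ⟨m, hm⟩ : (p : ℤ) ∣ Polynomial.eval (p : ℤ) r.divX - Polynomial.eval 0 r.divX := by
    simpa using Polynomial.sub_dvd_eval_sub (p : ℤ) 0 r.divX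
  have hdivx0 : Polynomial.eval (0 : ℤ) r.divX = r.coeff 1 := by
    rw [← Polynomial.coeff_zero_eq_eval_zero, Polynomial.coeff_divX]
  have key : (p : ℤ) ^ 2 ∣ (p : ℤ) * r.coeff 1 := by
    have : (p : ℤ) * r.coeff 1 =
        Polynomial.eval (p : ℤ) r - r.coeff 0 - (p : ℤ) ^ 2 * m := by
      have := hm
      rw [hdivx0] at this
      have h2 : Polynomial.eval (p : ℤ) r.divX = r.coeff 1 + (p : ℤ) * m := by linarith
      rw [hsplit, h2]; ring
    rw [this]
    exact dvd_sub (dvd_sub hdp hd0) (Dvd.intro m rfl)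
  rw [hgoal]
  have hp0 : (p : ℤ) ≠ 0 := by exact_mod_cast hp.ne_zero
  rw [sq] at key
  exact (mul_dvd_mul_iff_left hp0).mp key
end

section
/- Let p > n be a prime, let g be a nonzero linear functional on the space of monic degree-n polynomials over 𝔽_p (identified with 𝔽_p^n via coefficients), and let f be a monic polynomial of degree n over 𝔽_p. Then the function Q: 𝔽_p → 𝔽_p defined by Q(c) = g(f(x+c)) (where f(x+c) is identified with its coefficient vector) is a nonconstant polynomial function in c of degree at most n. -/
/-- Let `p > n` be prime, `g` a nonzero linear functional on the space of monic degree-`n`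
polynomials over `𝔽_p` (identified with `𝔽_p^n` via non-leading coefficients), and `f` monic
of degree `n` over `𝔽_p`. Then `c ↦ g(f(x+c))` is given by a nonconstant polynomial in `c` of
degree at most `n`. -/
theorem stmt_6 (n p : ℕ) [Fact p.Prime] (hn : 1 ≤ n) (hp : n < p)
    (g : (Fin n → ZMod p) →ₗ[ZMod p] ZMod p) (hg : g ≠ 0)
    (f : Polynomial (ZMod p)) (hf : f.Monic) (hdeg : f.natDegree = n) :
    ∃ Q : Polynomial (ZMod p), Q.natDegree ≤ n ∧ 0 < Q.natDegree ∧
      ∀ c : ZMod p,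
        Q.eval c = g (fun i => (f.comp (Polynomial.X + Polynomial.C c)).coeff (i : ℕ)) := by
  classical
  set a : Fin n → ZMod p := fun i => g (fun j => if i = j then 1 else 0) with ha
  set Q : Polynomial (ZMod p) :=
    ∑ i : Fin n, Polynomial.C (a i) * Polynomial.hasseDeriv (i : ℕ) f with hQ
  -- there exists i with a i ≠ 0
  have hex : ∃ i : Fin n, a i ≠ 0 := by
    by_contra h
    push_neg at h
    refine hg (LinearMap.ext fun v => ?_)
    rw [LinearMap.pi_apply_eq_sum_univ g v, LinearMap.zero_apply]
    exact Finset.sum_eq_zero fun i _ => by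
      rw [show g (fun j => if i = j then 1 else 0) = 0 from h i, smul_zero]
  -- pick minimal such i
  set S : Finset (Fin n) := Finset.univ.filter (fun i => a i ≠ 0) with hS
  have hSne : S.Nonempty := by
    obtain ⟨i, hi⟩ := hex
    exact ⟨i, by simp [hS, hi]⟩
  set i₀ : Fin n := S.min' hSne with hi₀
  have hai₀ : a i₀ ≠ 0 := by
    have := S.min'_mem hSne
    simpa [hS] using this
  have hbelow : ∀ i : Fin n, i < i₀ → a i = 0 := by
    intro i hi
    by_contra h
    have : i₀ ≤ i := S.min'_le i (by simp [hS, h])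
    exact absurd hi (not_lt.mpr this)
  -- key coefficient of hasse derivatives
  have hhd : ∀ i : Fin n,
      (Polynomial.hasseDeriv (i : ℕ) f).coeff (n - (i : ℕ)) = (n.choose (i : ℕ) : ZMod p) := by
    intro i
    rw [Polynomial.hasseDeriv_coeff]
    have h1 : n - (i : ℕ) + (i : ℕ) = n := Nat.sub_add_cancel i.2.le
    simp only [h1]
    have hc1 : f.coeff n = 1 := by rw [← hdeg]; exact hf.coeff_natDegree
    rw [hc1, mul_one]
  have hhdle : ∀ i : Fin n, (Polynomial.hasseDeriv (i : ℕ) f).natDegree ≤ n - (i : ℕ) := by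
    intro i
    simpa [hdeg] using Polynomial.natDegree_hasseDeriv_le f (i : ℕ)
  refine ⟨Q, ?_, ?_, ?_⟩
  · -- degree bound
    refine Polynomial.natDegree_sum_le_of_forall_le _ _ (fun i _ => ?_)
    calc (Polynomial.C (a i) * Polynomial.hasseDeriv (i : ℕ) f).natDegree
        ≤ (Polynomial.hasseDeriv (i : ℕ) f).natDegree := Polynomial.natDegree_C_mul_le _ _
      _ ≤ n - (i : ℕ) := hhdle i
      _ ≤ n := Nat.sub_le _ _
  · -- nonconstant
    have hcoeff : Q.coeff (n - (i₀ : ℕ)) = a i₀ * (n.choose (i₀ : ℕ) : ZMod p) := by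
      rw [hQ, Polynomial.finset_sum_coeff]
      rw [Finset.sum_eq_single i₀]
      · rw [Polynomial.coeff_C_mul, hhd]
      · intro i _ hne
        rcases lt_or_gt_of_ne hne with h | h
        · -- i > i₀ impossible case split: here hne says i ≠ i₀
          -- h : i < i₀
          simp [Polynomial.coeff_C_mul, hbelow i h]
        · -- h : i > i₀, coefficient vanishes
          have hz : (Polynomial.hasseDeriv (i : ℕ) f).coeff (n - (i₀ : ℕ)) = 0 := by
            apply Polynomial.coeff_eq_zero_of_natDegree_lt
            have := hhdle i
            have hii : (i₀ : ℕ) < (i : ℕ) := h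
            have hin : (i : ℕ) < n := i.2
            omega
          simp [Polynomial.coeff_C_mul, hz]
      · intro h
        exact absurd (Finset.mem_univ i₀) h
    have hchoose : (n.choose (i₀ : ℕ) : ZMod p) ≠ 0 := by
      rw [Ne, ZMod.natCast_eq_zero_iff]
      intro hdvd
      have hdvdfac : n.choose (i₀ : ℕ) ∣ n.factorial := by
        refine ⟨(i₀ : ℕ).factorial * (n - (i₀ : ℕ)).factorial, ?_⟩
        rw [← mul_assoc, Nat.choose_mul_factorial_mul_factorial i₀.2.le]
      have : p ∣ n.factorial := hdvd.trans hdvdfac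
      have hle : p ≤ n := (Nat.Prime.dvd_factorial (Fact.out)).mp this
      omega
    have hQc : Q.coeff (n - (i₀ : ℕ)) ≠ 0 := by
      rw [hcoeff]
      exact mul_ne_zero hai₀ hchoose
    have : n - (i₀ : ℕ) ≤ Q.natDegree := Polynomial.le_natDegree_of_ne_zero hQc
    have hin : (i₀ : ℕ) < n := i₀.2
    omega
  · -- evaluation formula
    intro c
    rw [LinearMap.pi_apply_eq_sum_univ g
      (fun i : Fin n => (f.comp (Polynomial.X + Polynomial.C c)).coeff (i : ℕ))]
    rw [hQ, Polynomial.eval_finset_sum]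
    refine Finset.sum_congr rfl (fun i _ => ?_)
    rw [← Polynomial.taylor_apply, Polynomial.taylor_coeff, Polynomial.eval_mul,
      Polynomial.eval_C, smul_eq_mul]
    exact mul_comm _ _
end

section
/- For n ≥ 2, the double discriminant DD(a_1,...,a_{n−1}) := Disc_{a_n}(Disc_x(x^n + a_1 x^{n−1} + ... + a_{n−1} x + a_n)), i.e., the discriminant with respect to a_n of the polynomial discriminant of f viewed as a polynomial in a_n, is not identically zero as a polynomial in a_1,...,a_{n−1}. -/
noncomputable section

/-- The Sylvester matrix of two polynomials `P`, `Q`, regarded as having degrees (at most)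
`m` and `n` respectively. -/
def sylvester {R : Type*} [CommRing R] (m n : ℕ) (P Q : Polynomial R) :
    Matrix (Fin (m + n)) (Fin (m + n)) R :=
  Matrix.of fun i j =>
    if (i : ℕ) < n then
      (if (j : ℕ) ≤ m + (i : ℕ) then P.coeff (m + (i : ℕ) - (j : ℕ)) else 0)
    else
      (if (j : ℕ) ≤ n + ((i : ℕ) - n) then Q.coeff (n + ((i : ℕ) - n) - (j : ℕ)) else 0)

/-- The resultant of two polynomials of degrees (at most) `m` and `n`. -/
def resultant {R : Type*} [CommRing R] (m n : ℕ) (P Q : Polynomial R) : R :=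
  (sylvester m n P Q).det

/-- The discriminant of a monic polynomial of degree `n`:
`disc n P = (-1)^{n(n-1)/2} · Res(P, P')`. -/
def disc {R : Type*} [CommRing R] (n : ℕ) (P : Polynomial R) : R :=
  (-1) ^ (n * (n - 1) / 2) * resultant n (n - 1) P (Polynomial.derivative P)

namespace DDaux
open Polynomial

variable {R S : Type*} [CommRing R] [CommRing S]

lemma sylvester_map (φ : R →+* S) (m n : ℕ) (P Q : Polynomial R) :
    sylvester m n (P.map φ) (Q.map φ) = (sylvester m n P Q).map φ := by
  ext i j
  simp only [_root_.sylvester, Matrix.of_apply, Matrix.map_apply, coeff_map, apply_ite φ, map_zero]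

lemma resultant_map (φ : R →+* S) (m n : ℕ) (P Q : Polynomial R) :
    resultant m n (P.map φ) (Q.map φ) = φ (resultant m n P Q) := by
  rw [_root_.resultant, _root_.resultant, sylvester_map, RingHom.map_det]; rfl

lemma disc_map (φ : R →+* S) (n : ℕ) (P : Polynomial R) :
    disc n (P.map φ) = φ (disc n P) := by
  rw [disc, disc, derivative_map, resultant_map, map_mul, map_pow, map_neg, map_one]

end DDaux

namespace DDaux
open Polynomial Finset

variable {R : Type*} [CommRing R]

/-- auxiliary polynomial with prescribed (reversed) coefficients -/
def vA (n : ℕ) (w : ℕ → R) : Polynomial R := ∑ i ∈ Finset.range n, C (w i) * X ^ (n - 1 - i)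

lemma natDegree_vA_le (n : ℕ) (w : ℕ → R) : (vA n w).natDegree ≤ n - 1 :=
  natDegree_sum_le_of_forall_le _ _ fun i _ =>
    (natDegree_C_mul_X_pow_le _ _).trans (by omega)

lemma degree_vA_lt (n : ℕ) (w : ℕ → R) : (vA n w).degree < n := by
  rcases eq_or_ne (vA n w) 0 with h | h
  · rw [h, degree_zero]
    exact WithBot.bot_lt_coe n
  · rw [← natDegree_lt_iff_degree_lt h]
    have := natDegree_vA_le n w
    rcases Nat.eq_zero_or_pos n with h0 | h0
    · exfalso; apply h; simp [vA, h0]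
    · omega

lemma coeff_vA_mul (n : ℕ) (w : ℕ → R) (P : Polynomial R) (d : ℕ) :
    (vA n w * P).coeff d =
      ∑ i ∈ Finset.range n, w i * (if n - 1 - i ≤ d then P.coeff (d - (n - 1 - i)) else 0) := by
  rw [vA, Finset.sum_mul, finset_sum_coeff]
  refine Finset.sum_congr rfl fun i _ => ?_
  have h : C (w i) * X ^ (n - 1 - i) * P = C (w i) * (P * X ^ (n - 1 - i)) := by ring
  rw [h, coeff_C_mul, coeff_mul_X_pow']

lemma coeff_vA (n : ℕ) (w : ℕ → R) {i : ℕ} (hi : i < n) :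
    (vA n w).coeff (n - 1 - i) = w i := by
  rw [vA, finset_sum_coeff, Finset.sum_eq_single i]
  · simp [coeff_C_mul, coeff_X_pow]
  · intro b hb hbi
    rw [coeff_C_mul, coeff_X_pow, if_neg (by have := Finset.mem_range.mp hb; omega), mul_zero]
  · intro h; exact absurd (Finset.mem_range.mpr hi) h

lemma vA_congr {n : ℕ} {w w' : ℕ → R} (h : ∀ i < n, w i = w' i) : vA n w = vA n w' :=
  Finset.sum_congr rfl fun i hi => by rw [h i (Finset.mem_range.mp hi)]

lemma vA_coeffs {A : Polynomial R} {n : ℕ} (h : A.degree < n) :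
    vA n (fun i => A.coeff (n - 1 - i)) = A := by
  rcases Nat.eq_zero_or_pos n with h0 | h0
  · subst h0
    have hA : A = 0 := by
      by_contra hA
      exact absurd h (not_lt.mpr (le_trans (by simp) (zero_le_degree_iff.mpr hA)))
    simp [vA, hA]
  ext k
  by_cases hk : k < n
  · have h1 : n - 1 - (n - 1 - k) = k := by omega
    have := coeff_vA n (fun i => A.coeff (n - 1 - i)) (show n - 1 - k < n by omega)
    rw [h1] at this
    simpa [h1] using this
  · have hk' : n ≤ k := Nat.le_of_not_lt hk
    rw [coeff_eq_zero_of_natDegree_lt (lt_of_le_of_lt (natDegree_vA_le n _)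
        (show n - 1 < k by omega)),
      coeff_eq_zero_of_degree_lt (lt_of_lt_of_le h (by exact_mod_cast hk'))]

lemma vecMul_sylvester (m n : ℕ) (P Q : Polynomial R) (hP : P.natDegree ≤ m)
    (hQ : Q.natDegree ≤ n) (v : Fin (m + n) → R) (j : Fin (m + n)) :
    Matrix.vecMul v (sylvester m n P Q) j =
      (vA n (fun i => if h : i < m + n then v ⟨i, h⟩ else 0) * P
        + vA m (fun i => if h : n + i < m + n then v ⟨n + i, h⟩ else 0) * Q).coeff
        (m + n - 1 - (j : ℕ)) := by
  classical
  set w : ℕ → R := fun i => if h : i < m + n then v ⟨i, h⟩ else 0 with hw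
  set g : ℕ → R := fun i => w i *
    (if i < n then (if (j : ℕ) ≤ m + i then P.coeff (m + i - (j : ℕ)) else 0)
     else (if (j : ℕ) ≤ n + (i - n) then Q.coeff (n + (i - n) - (j : ℕ)) else 0)) with hg
  have hL : Matrix.vecMul v (sylvester m n P Q) j = ∑ i ∈ Finset.range (m + n), g i := by
    rw [Matrix.vecMul, dotProduct, ← Fin.sum_univ_eq_sum_range]
    refine Finset.sum_congr rfl fun i _ => ?_
    have : w (i : ℕ) = v i := by simp [hw, i.isLt]
    simp only [hg, this, _root_.sylvester, Matrix.of_apply]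
  have h1 : ∑ i ∈ Finset.Ico n (m + n), g i = ∑ i ∈ Finset.range m, g (n + i) := by
    rw [Finset.sum_Ico_eq_sum_range, Nat.add_sub_cancel]
  have hsplit : ∑ i ∈ Finset.range (m + n), g i =
      ∑ i ∈ Finset.range n, g i + ∑ i ∈ Finset.range m, g (n + i) := by
    rw [← h1, Finset.range_eq_Ico, Finset.range_eq_Ico]
    exact (Finset.sum_Ico_consecutive g (Nat.zero_le n) (by omega : n ≤ m + n)).symm
  rw [hL, hsplit, coeff_add, coeff_vA_mul, coeff_vA_mul]
  congr 1
  · refine Finset.sum_congr rfl fun i hi => ?_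
    have hi' := Finset.mem_range.mp hi
    have hj := j.isLt
    simp only [hg, if_pos hi']
    congr 1
    by_cases hc : (j : ℕ) ≤ m + i
    · rw [if_pos hc, if_pos (by omega)]
      congr 1
      omega
    · rw [if_neg hc, if_neg (by omega)]
  · refine Finset.sum_congr rfl fun i hi => ?_
    have hi' := Finset.mem_range.mp hi
    have hj := j.isLt
    simp only [hg, if_neg (show ¬ n + i < n by omega), Nat.add_sub_cancel_left]
    congr 1
    by_cases hc : (j : ℕ) ≤ n + i
    · rw [if_pos hc, if_pos (by omega)]
      congr 1
      omega
    · rw [if_neg hc, if_neg (by omega)]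

end DDaux

namespace DDaux
open Polynomial Finset

variable {K : Type*} [Field K]

theorem resultant_eq_zero_iff {m n : ℕ} (hmn : 0 < m + n) {P Q : Polynomial K}
    (hP : P.natDegree ≤ m) (hQ : Q.natDegree ≤ n) :
    resultant m n P Q = 0 ↔
      ∃ A B : Polynomial K, (A ≠ 0 ∨ B ≠ 0) ∧ A.degree < n ∧ B.degree < m
        ∧ A * P + B * Q = 0 := by
  classical
  rw [_root_.resultant, ← Matrix.exists_vecMul_eq_zero_iff]
  constructor
  · rintro ⟨v, hv, hv0⟩
    set w : ℕ → K := fun i => if h : i < m + n then v ⟨i, h⟩ else 0 with hw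
    refine ⟨vA n w, vA m (fun i => w (n + i)), ?_, degree_vA_lt n w, degree_vA_lt m _, ?_⟩
    · obtain ⟨i, hi⟩ := Function.ne_iff.mp hv
      by_cases hin : (i : ℕ) < n
      · left
        intro hA0
        apply hi
        have h1 : (vA n w).coeff (n - 1 - (i : ℕ)) = w i := coeff_vA n w hin
        rw [hA0, coeff_zero] at h1
        have h2 : w (i : ℕ) = v i := by simp [hw, i.isLt]
        rw [← h2, ← h1]
        rfl
      · right
        intro hB0
        apply hi
        have hlt : (i : ℕ) - n < m := by have := i.isLt; omega
        have h1 : (vA m (fun k => w (n + k))).coeff (m - 1 - ((i : ℕ) - n)) =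
            w (n + ((i : ℕ) - n)) := coeff_vA m _ hlt
        rw [hB0, coeff_zero] at h1
        have h3 : n + ((i : ℕ) - n) = (i : ℕ) := by omega
        rw [h3] at h1
        have h2 : w (i : ℕ) = v i := by simp [hw, i.isLt]
        rw [← h2, ← h1]
        rfl
    · ext d
      rw [coeff_zero]
      by_cases hd : d < m + n
      · have h1 := congrFun hv0 ⟨m + n - 1 - d, by omega⟩
        rw [vecMul_sylvester m n P Q hP hQ] at h1
        have h2 : m + n - 1 - (m + n - 1 - d) = d := by omega
        rw [Pi.zero_apply] at h1
        simpa [h2] using h1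
      · apply coeff_eq_zero_of_natDegree_lt
        apply lt_of_le_of_lt (natDegree_add_le _ _)
        rw [max_lt_iff]
        constructor
        · rcases eq_or_ne (vA n w) 0 with hz | hz
          · simp only [hz, zero_mul, natDegree_zero]; omega
          · apply lt_of_le_of_lt (natDegree_mul_le)
            have h4 : (vA n w).natDegree ≤ n - 1 := natDegree_vA_le n w
            have h5 : 1 ≤ n := by
              by_contra h5
              exact hz (by simp [vA, show n = 0 by omega])
            omega
        · rcases eq_or_ne (vA m (fun i => w (n + i))) 0 with hz | hz
          · simp only [hz, zero_mul, natDegree_zero]; omega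
          · apply lt_of_le_of_lt (natDegree_mul_le)
            have h4 := natDegree_vA_le m (fun i => w (n + i))
            have h5 : 1 ≤ m := by
              by_contra h5
              exact hz (by simp [vA, show m = 0 by omega])
            omega
  · rintro ⟨A, B, hAB, hAn, hBm, hrel⟩
    refine ⟨fun i => if h : (i : ℕ) < n then A.coeff (n - 1 - (i : ℕ))
      else B.coeff (m - 1 - ((i : ℕ) - n)), ?_, ?_⟩
    · rcases hAB with hA | hB
      · have hn1 : 1 ≤ n := by
          by_contra h5
          exact hA (by
            by_contra hA0
            exact absurd hAn (not_lt.mpr (le_trans (by simp [show n = 0 by omega])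
              (zero_le_degree_iff.mpr hA0))))
        have hk : A.natDegree < n := by
          rwa [natDegree_lt_iff_degree_lt hA]
        intro hv0
        have := congrFun hv0 ⟨n - 1 - A.natDegree, by omega⟩
        simp only [Pi.zero_apply] at this
        rw [dif_pos (show n - 1 - A.natDegree < n by omega)] at this
        rw [show n - 1 - (n - 1 - A.natDegree) = A.natDegree by omega] at this
        exact leadingCoeff_ne_zero.mpr hA this
      · have hm1 : 1 ≤ m := by
          by_contra h5
          exact hB (by
            by_contra hB0
            exact absurd hBm (not_lt.mpr (le_trans (by simp [show m = 0 by omega])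
              (zero_le_degree_iff.mpr hB0))))
        have hk : B.natDegree < m := by
          rwa [natDegree_lt_iff_degree_lt hB]
        intro hv0
        have := congrFun hv0 ⟨n + (m - 1 - B.natDegree), by omega⟩
        simp only [Pi.zero_apply] at this
        rw [dif_neg (show ¬ (n + (m - 1 - B.natDegree) < n) by omega)] at this
        rw [show n + (m - 1 - B.natDegree) - n = m - 1 - B.natDegree by omega] at this
        rw [show m - 1 - (m - 1 - B.natDegree) = B.natDegree by omega] at this
        exact leadingCoeff_ne_zero.mpr hB this
    · funext j
      rw [vecMul_sylvester m n P Q hP hQ]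
      have hA' : vA n (fun i => if h : i < m + n then
          (if h2 : ((⟨i, h⟩ : Fin (m + n)) : ℕ) < n then A.coeff (n - 1 - i)
            else B.coeff (m - 1 - (i - n))) else 0) = A := by
        rw [vA_congr (w' := fun i => A.coeff (n - 1 - i)) fun i hi => by
          simp [show i < m + n by omega, hi]]
        exact vA_coeffs hAn
      have hB' : vA m (fun i => if h : n + i < m + n then
          (if h2 : ((⟨n + i, h⟩ : Fin (m + n)) : ℕ) < n then A.coeff (n - 1 - (n + i))
            else B.coeff (m - 1 - (n + i - n))) else 0) = B := by
        rw [vA_congr (w' := fun i => B.coeff (m - 1 - i)) fun i hi => by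
          simp [show n + i < m + n by omega, show ¬ (n + i < n) by omega,
            Nat.add_sub_cancel_left]]
        exact vA_coeffs hBm
      rw [hA', hB', hrel, coeff_zero, Pi.zero_apply]

theorem resultant_ne_zero_of_isCoprime {m n : ℕ} (hmn : 0 < m + n) {P Q : Polynomial K}
    (hP0 : P ≠ 0) (hP : P.natDegree = m) (hQ : Q.natDegree ≤ n) (hco : IsCoprime P Q) :
    resultant m n P Q ≠ 0 := by
  intro h0
  obtain ⟨A, B, hAB, hAn, hBm, hrel⟩ := (resultant_eq_zero_iff hmn hP.le hQ).mp h0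
  have hdvd : P ∣ B * Q := ⟨-A, by linear_combination hrel⟩
  have hB : B = 0 := by
    apply eq_zero_of_dvd_of_degree_lt (hco.dvd_of_dvd_mul_right hdvd)
    rwa [degree_eq_natDegree hP0, hP]
  have hA : A = 0 := by
    have h1 : A * P = 0 := by rw [hB] at hrel; rw [← hrel]; ring
    rcases mul_eq_zero.mp h1 with h | h
    · exact h
    · exact absurd h hP0
  rcases hAB with h | h
  · exact h hA
  · exact h hB

theorem resultant_eq_zero_of_common_root {m n : ℕ} {P Q : Polynomial K}
    (hP : P.natDegree ≤ m) (hQ : Q.natDegree ≤ n) (hP0 : P ≠ 0) (hQ0 : Q ≠ 0) {t : K}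
    (htP : P.eval t = 0) (htQ : Q.eval t = 0) :
    resultant m n P Q = 0 := by
  obtain ⟨P₁, hP₁⟩ := dvd_iff_isRoot.mpr htP
  obtain ⟨Q₁, hQ₁⟩ := dvd_iff_isRoot.mpr htQ
  have hP₁0 : P₁ ≠ 0 := fun h => hP0 (by simp [hP₁, h])
  have hQ₁0 : Q₁ ≠ 0 := fun h => hQ0 (by simp [hQ₁, h])
  have hPdeg : P.natDegree = 1 + P₁.natDegree := by
    rw [hP₁, natDegree_mul (X_sub_C_ne_zero t) hP₁0, natDegree_X_sub_C]
  have hQdeg : Q.natDegree = 1 + Q₁.natDegree := by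
    rw [hQ₁, natDegree_mul (X_sub_C_ne_zero t) hQ₁0, natDegree_X_sub_C]
  have hmn : 0 < m + n := by omega
  rw [resultant_eq_zero_iff hmn hP hQ]
  refine ⟨Q₁, -P₁, Or.inr (neg_ne_zero.mpr hP₁0), ?_, ?_, by
    rw [hP₁, hQ₁]; ring⟩
  · rw [← natDegree_lt_iff_degree_lt hQ₁0]
    omega
  · rw [degree_neg, ← natDegree_lt_iff_degree_lt hP₁0]
    omega

end DDaux

namespace DDaux
open Polynomial Finset

lemma natDegree_det_le {N : Type*} [Fintype N] [DecidableEq N] {R : Type*} [CommRing R]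
    (M : Matrix N N (Polynomial R)) (d : N → ℕ) (h : ∀ i j, (M i j).natDegree ≤ d i) :
    M.det.natDegree ≤ ∑ i, d i := by
  rw [Matrix.det_apply]
  apply natDegree_sum_le_of_forall_le
  intro σ _
  have h1 : (Equiv.Perm.sign σ • ∏ i, M (σ i) i) =
      ((Equiv.Perm.sign σ : ℤ) : Polynomial R) * ∏ i, M (σ i) i := by
    rw [Units.smul_def, zsmul_eq_mul]
  rw [h1]
  apply le_trans natDegree_mul_le
  rw [natDegree_intCast, zero_add]
  apply le_trans (natDegree_prod_le _ _)
  calc ∑ i, (M (σ i) i).natDegree ≤ ∑ i, d (σ i) := Finset.sum_le_sum fun i _ => h _ i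
    _ = ∑ i, d i := Equiv.sum_comp σ d

/-- The generic trinomial `x^n - x + b` over `K[b]`. -/
def trinom (K : Type*) [CommRing K] (n : ℕ) : Polynomial (Polynomial K) :=
  X ^ n - X + C X

variable {K : Type*} [Field K]

lemma trinom_coeff_le (n k : ℕ) (hn : 2 ≤ n) : ((trinom K n).coeff k).natDegree ≤ 1 := by
  simp only [trinom, coeff_add, coeff_sub, coeff_X_pow, coeff_X, coeff_C]
  split_ifs <;> simp_all <;> omega

lemma derivative_trinom (n : ℕ) (hn : 2 ≤ n) :
    Polynomial.derivative (trinom K n) = C ((n : Polynomial K)) * X ^ (n - 1) - 1 := by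
  simp [trinom, derivative_X_pow]

lemma derivative_trinom_coeff (n k : ℕ) (hn : 2 ≤ n) :
    ((Polynomial.derivative (trinom K n)).coeff k).natDegree = 0 := by
  rw [derivative_trinom n hn]
  simp only [coeff_sub, coeff_C_mul, coeff_X_pow, coeff_one]
  split_ifs <;> first | (exfalso; omega) | simp

lemma sum_ite_lt (a b : ℕ) (hab : a ≤ b) :
    ∑ i : Fin b, (if (i : ℕ) < a then 1 else 0) = a := by
  rw [Fin.sum_univ_eq_sum_range (fun i => if i < a then 1 else 0) b]
  have h1 : ∑ i ∈ Finset.Ico a b, (if i < a then 1 else 0) = 0 :=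
    Finset.sum_eq_zero fun i hi => by
      rw [if_neg (by have := (Finset.mem_Ico.mp hi).1; omega)]
  have h2 : ∑ i ∈ Finset.range a, (if i < a then 1 else 0) = a := by
    rw [Finset.sum_congr rfl fun i hi => if_pos (Finset.mem_range.mp hi)]
    simp
  rw [Finset.range_eq_Ico, ← Finset.sum_Ico_consecutive _ (Nat.zero_le a) hab,
    ← Finset.range_eq_Ico, h1, h2, add_zero]

lemma natDegree_disc_trinom_le (n : ℕ) (hn : 2 ≤ n) :
    (disc n (trinom K n)).natDegree ≤ n - 1 := by
  rw [disc, _root_.resultant]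
  apply le_trans natDegree_mul_le
  have h1 : ((-1 : Polynomial K) ^ (n * (n - 1) / 2)).natDegree = 0 := by
    simp [natDegree_pow]
  rw [h1, zero_add]
  have h2 := natDegree_det_le (sylvester n (n - 1) (trinom K n)
      (Polynomial.derivative (trinom K n)))
    (fun i => if (i : ℕ) < n - 1 then 1 else 0) ?_
  · apply le_trans h2
    rw [sum_ite_lt (n - 1) (n + (n - 1)) (by omega)]
  · intro i j
    show _ ≤ if (i : ℕ) < n - 1 then 1 else 0
    by_cases hi : (i : ℕ) < n - 1
    · rw [if_pos hi]
      simp only [_root_.sylvester, Matrix.of_apply, if_pos hi]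
      split_ifs
      · exact trinom_coeff_le _ _ hn
      · simp
    · rw [if_neg hi]
      simp only [_root_.sylvester, Matrix.of_apply, if_neg hi]
      split_ifs
      · exact le_of_eq (derivative_trinom_coeff _ _ hn)
      · simp

end DDaux

namespace DDaux
open Polynomial Finset

lemma isCoprime_of_no_common_root {P Q : Polynomial ℂ} (hP : P ≠ 0)
    (h : ∀ z, P.eval z = 0 → Q.eval z ≠ 0) : IsCoprime P Q := by
  classical
  rw [← EuclideanDomain.gcd_isUnit_iff]
  by_contra hu
  have hg0 : EuclideanDomain.gcd P Q ≠ 0 := fun h0 =>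
    hP (EuclideanDomain.gcd_eq_zero_iff.mp h0).1
  have hdeg : 0 < (EuclideanDomain.gcd P Q).degree :=
    lt_of_le_of_ne (zero_le_degree_iff.mpr hg0)
      (Ne.symm fun h0 => hu (isUnit_iff_degree_eq_zero.mpr h0))
  obtain ⟨z, hz⟩ := IsAlgClosed.exists_root _ (ne_of_gt hdeg)
  exact h z (eval_eq_zero_of_dvd_of_eval_eq_zero (EuclideanDomain.gcd_dvd_left P Q) hz)
    (eval_eq_zero_of_dvd_of_eval_eq_zero (EuclideanDomain.gcd_dvd_right P Q) hz)

lemma trinom_map_eval (n : ℕ) (β : ℂ) :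
    (trinom ℂ n).map (evalRingHom β) = X ^ n - X + C β := by
  simp [trinom, Polynomial.map_add, Polynomial.map_sub, Polynomial.map_pow]

lemma eval_disc_trinom (n : ℕ) (β : ℂ) :
    (disc n (trinom ℂ n)).eval β = disc n (X ^ n - X + C β) :=
  calc (disc n (trinom ℂ n)).eval β = (evalRingHom β) (disc n (trinom ℂ n)) := rfl
    _ = disc n ((trinom ℂ n).map (evalRingHom β)) := (disc_map _ _ _).symm
    _ = disc n (X ^ n - X + C β) := by rw [trinom_map_eval]

lemma natDegree_Pbeta (n : ℕ) (hn : 2 ≤ n) (β : ℂ) :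
    (X ^ n - X + C β : Polynomial ℂ).natDegree = n := by
  have h : (X ^ n - X + C β : Polynomial ℂ) = X ^ n + (C β - X) := by ring
  rw [h, natDegree_add_eq_left_of_degree_lt, natDegree_X_pow]
  rw [degree_X_pow]
  apply lt_of_le_of_lt (degree_sub_le _ _)
  exact max_lt (lt_of_le_of_lt degree_C_le (by exact_mod_cast (by omega : 0 < n)))
    (by rw [degree_X]; exact_mod_cast (by omega : 1 < n))

lemma Pbeta_ne_zero (n : ℕ) (hn : 2 ≤ n) (β : ℂ) :
    (X ^ n - X + C β : Polynomial ℂ) ≠ 0 := by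
  intro h
  have h2 := natDegree_Pbeta n hn β
  rw [h, natDegree_zero] at h2
  omega

lemma deriv_Pbeta (n : ℕ) (hn : 2 ≤ n) (β : ℂ) :
    Polynomial.derivative (X ^ n - X + C β : Polynomial ℂ) = C (n : ℂ) * X ^ (n - 1) - 1 := by
  simp [derivative_X_pow]

lemma Qbeta_ne_zero (n : ℕ) (hn : 2 ≤ n) :
    (C (n : ℂ) * X ^ (n - 1) - 1 : Polynomial ℂ) ≠ 0 := by
  intro h
  have := congrArg (fun p => Polynomial.coeff p 0) h
  simp [coeff_X_pow, show ¬ (0 = n - 1) by omega] at this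

lemma eval_disc_trinom_root (n : ℕ) (hn : 2 ≤ n) {t : ℂ} (ht : t ^ (n - 1) = (n : ℂ)⁻¹) :
    (disc n (trinom ℂ n)).eval ((1 - (n : ℂ)⁻¹) * t) = 0 := by
  have hn0 : ((n : ℂ)) ≠ 0 := Nat.cast_ne_zero.mpr (by omega)
  set β := (1 - (n : ℂ)⁻¹) * t
  rw [eval_disc_trinom, disc]
  apply mul_eq_zero_of_right
  have htn : t ^ n = t ^ (n - 1) * t := by
    rw [← pow_succ]; congr 1; omega
  apply resultant_eq_zero_of_common_root (le_of_eq (natDegree_Pbeta n hn β))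
    (le_trans (natDegree_derivative_le _) (by rw [natDegree_Pbeta n hn β]))
    (Pbeta_ne_zero n hn β) (t := t)
  · rw [deriv_Pbeta n hn β]
    exact Qbeta_ne_zero n hn
  · simp only [eval_add, eval_sub, eval_pow, eval_X, eval_C, htn, ht, β]
    ring
  · rw [deriv_Pbeta n hn β]
    simp only [eval_sub, eval_mul, eval_pow, eval_X, eval_C, eval_one, ht]
    rw [mul_inv_cancel₀ hn0, sub_self]

lemma eval_disc_trinom_zero (n : ℕ) (hn : 2 ≤ n) :
    (disc n (trinom ℂ n)).eval 0 ≠ 0 := by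
  have hn0 : ((n : ℂ)) ≠ 0 := Nat.cast_ne_zero.mpr (by omega)
  rw [eval_disc_trinom, disc]
  apply mul_ne_zero (pow_ne_zero _ (neg_ne_zero.mpr one_ne_zero))
  apply resultant_ne_zero_of_isCoprime (by omega) (Pbeta_ne_zero n hn 0)
    (natDegree_Pbeta n hn 0)
    (le_trans (natDegree_derivative_le _) (by rw [natDegree_Pbeta n hn 0]))
  rw [deriv_Pbeta n hn 0]
  apply isCoprime_of_no_common_root (Pbeta_ne_zero n hn 0)
  intro z hz
  simp only [eval_add, eval_sub, eval_pow, eval_X, eval_C, add_zero] at hz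
  simp only [eval_sub, eval_mul, eval_pow, eval_X, eval_C, eval_one]
  by_cases hz0 : z = 0
  · subst hz0
    rw [zero_pow (by omega : n - 1 ≠ 0)]
    intro h; simp at h
  · have hzn : z ^ n = z := sub_eq_zero.mp hz
    have hz1 : z ^ (n - 1) = 1 := by
      have h1 : z * z ^ (n - 1) = z * 1 := by
        rw [mul_one, ← pow_succ', show n - 1 + 1 = n by omega, hzn]
      exact mul_left_cancel₀ hz0 h1
    rw [hz1, mul_one]
    intro h
    exact (show (n : ℂ) ≠ 1 by exact_mod_cast (by omega : n ≠ 1)) (sub_eq_zero.mp h)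

end DDaux

namespace DDaux
open Polynomial Finset

theorem key_complex (n : ℕ) (hn : 2 ≤ n) :
    resultant (n - 1) (n - 2) (disc n (trinom ℂ n))
      (Polynomial.derivative (disc n (trinom ℂ n))) ≠ 0 := by
  classical
  set Dc := disc n (trinom ℂ n) with hDc
  have hD0 : Dc ≠ 0 := fun h => eval_disc_trinom_zero n hn (by rw [← hDc, h, eval_zero])
  have hn0 : ((n : ℂ)) ≠ 0 := Nat.cast_ne_zero.mpr (by omega)
  have hsep : (X ^ (n - 1) - C ((n : ℂ))⁻¹).Separable :=
    separable_X_pow_sub_C _ (Nat.cast_ne_zero.mpr (by omega : n - 1 ≠ 0)) (inv_ne_zero hn0)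
  have hTpoly0 : (X ^ (n - 1) - C ((n : ℂ))⁻¹) ≠ 0 := X_pow_sub_C_ne_zero (by omega) _
  have hcard_roots : Multiset.card (X ^ (n - 1) - C ((n : ℂ))⁻¹).roots = n - 1 := by
    have h := splits_iff_card_roots.mp (IsAlgClosed.splits (k := ℂ) (X ^ (n - 1) - C ((n : ℂ))⁻¹))
    rwa [natDegree_X_pow_sub_C] at h
  set T := (X ^ (n - 1) - C ((n : ℂ))⁻¹).roots.toFinset with hT
  have hTcard : T.card = n - 1 := by
    rw [hT, Multiset.toFinset_card_of_nodup (nodup_roots hsep), hcard_roots]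
  have hc0 : (1 - (n : ℂ)⁻¹) ≠ 0 :=
    sub_ne_zero.mpr fun h =>
      (show (n : ℂ) ≠ 1 by exact_mod_cast (by omega : n ≠ 1)) (inv_eq_one.mp h.symm)
  set S := T.image (fun t => (1 - (n : ℂ)⁻¹) * t) with hS
  have hScard : S.card = n - 1 := by
    rw [hS, Finset.card_image_of_injective _ (mul_right_injective₀ hc0), hTcard]
  have hSsub : S ⊆ Dc.roots.toFinset := by
    intro β hβ
    obtain ⟨t, ht, rfl⟩ := Finset.mem_image.mp hβ
    have ht' : t ^ (n - 1) = (n : ℂ)⁻¹ := by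
      have h2 := (mem_roots'.mp (Multiset.mem_toFinset.mp ht)).2
      simpa [IsRoot, sub_eq_zero] using h2
    rw [Multiset.mem_toFinset, mem_roots']
    exact ⟨hD0, eval_disc_trinom_root n hn ht'⟩
  have h2 : n - 1 ≤ Dc.roots.toFinset.card := hScard ▸ Finset.card_le_card hSsub
  have h3 : Dc.roots.toFinset.card ≤ Multiset.card Dc.roots := Multiset.toFinset_card_le _
  have h4 : Multiset.card Dc.roots ≤ Dc.natDegree := Dc.card_roots'
  have h5 : Dc.natDegree ≤ n - 1 := natDegree_disc_trinom_le n hn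
  have hnodup : Dc.roots.Nodup := Multiset.toFinset_card_eq_card_iff_nodup.mp (by omega)
  have hDdeg : Dc.natDegree = n - 1 := by omega
  have hsepD : Dc.Separable :=
    (nodup_roots_iff_of_splits hD0 (IsAlgClosed.splits (k := ℂ) Dc)).mp hnodup
  exact resultant_ne_zero_of_isCoprime (by omega) hD0 hDdeg
    (le_trans (natDegree_derivative_le _) (by omega)) ((separable_def _).mp hsepD)

end DDaux

namespace DDaux
open Polynomial

def f0 (n : ℕ) : Polynomial (Polynomial (MvPolynomial (Fin (n - 1)) ℚ)) :=
  X ^ n + ∑ i : Fin (n - 1), C (C (MvPolynomial.X i)) * X ^ (n - 1 - (i : ℕ)) + C X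

def ρℂ (n : ℕ) : MvPolynomial (Fin (n - 1)) ℚ →+* ℂ :=
  MvPolynomial.eval₂Hom (algebraMap ℚ ℂ) (fun i => if (i : ℕ) = n - 2 then -1 else 0)

lemma f0_map_rho (n : ℕ) (hn : 2 ≤ n) :
    (f0 n).map (Polynomial.mapRingHom (ρℂ n)) = trinom ℂ n := by
  rw [f0, trinom]
  rw [Polynomial.map_add, Polynomial.map_add, Polynomial.map_pow, Polynomial.map_X,
    Polynomial.map_C]
  have hsum : (∑ i : Fin (n - 1), C (C (MvPolynomial.X i)) * X ^ (n - 1 - (i : ℕ))).map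
      (Polynomial.mapRingHom (ρℂ n)) = -X := by
    rw [← Polynomial.coe_mapRingHom, map_sum]
    rw [Finset.sum_eq_single (⟨n - 2, by omega⟩ : Fin (n - 1))]
    · simp only [Polynomial.coe_mapRingHom, Polynomial.map_mul, Polynomial.map_pow,
        Polynomial.map_X, Polynomial.map_C]
      rw [show n - 1 - (n - 2) = 1 by omega, pow_one]
      rw [show (ρℂ n) (MvPolynomial.X (⟨n - 2, by omega⟩ : Fin (n - 1))) = -1 by
        rw [ρℂ, MvPolynomial.eval₂Hom_X']
        simp]
      simp
      ring
    · intro i _ hi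
      have hi' : (i : ℕ) ≠ n - 2 := fun h => hi (Fin.ext (by simpa using h))
      simp only [Polynomial.coe_mapRingHom, Polynomial.map_mul, Polynomial.map_pow,
        Polynomial.map_X, Polynomial.map_C]
      rw [show (ρℂ n) (MvPolynomial.X i) = 0 by
        rw [ρℂ, MvPolynomial.eval₂Hom_X']
        simp [hi']]
      simp
    · intro h
      exact absurd (Finset.mem_univ _) h
  rw [hsum]
  rw [show (Polynomial.mapRingHom (ρℂ n)) X = X from Polynomial.map_X _]
  ring

end DDaux
set_option maxHeartbeats 2000000
set_option synthInstance.maxHeartbeats 1000000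
open Polynomial DDaux

/-- For `n ≥ 2`, the double discriminant
`DD(a₁,…,a_{n-1}) = Disc_{aₙ}(Disc_x(x^n + a₁x^{n-1} + ⋯ + a_{n-1}x + aₙ))`
is not identically zero in `a₁, …, a_{n-1}`. Here `Disc_x f` is a polynomial of degree `n-1`
in `aₙ` with coefficients in the rational function field `F = ℚ(a₁,…,a_{n-1})`, and the
discriminant of the (not necessarily monic) polynomial `D` of degree `n-1` in `aₙ` is
`(-1)^{(n-1)(n-2)/2} · lc(D)⁻¹ · Res(D, D')`. -/
theorem stmt_13 (n : ℕ) (hn : 2 ≤ n) :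
    let fpoly : Polynomial (Polynomial (FractionRing (MvPolynomial (Fin (n - 1)) ℚ))) :=
      Polynomial.X ^ n
        + ∑ i : Fin (n - 1),
            Polynomial.C (Polynomial.C
              (algebraMap (MvPolynomial (Fin (n - 1)) ℚ)
                (FractionRing (MvPolynomial (Fin (n - 1)) ℚ)) (MvPolynomial.X i)))
              * Polynomial.X ^ (n - 1 - (i : ℕ))
        + Polynomial.C Polynomial.X
    let D : Polynomial (FractionRing (MvPolynomial (Fin (n - 1)) ℚ)) := disc n fpoly
    (-1 : FractionRing (MvPolynomial (Fin (n - 1)) ℚ)) ^ ((n - 1) * (n - 2) / 2)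
        * (D.leadingCoeff)⁻¹
        * resultant (n - 1) (n - 2) D (Polynomial.derivative D) ≠ 0 := by
  intro fpoly D
  have hfpoly : fpoly = (f0 n).map (Polynomial.mapRingHom (algebraMap (MvPolynomial (Fin (n - 1)) ℚ) (FractionRing (MvPolynomial (Fin (n - 1)) ℚ)))) := by
    show Polynomial.X ^ n
        + (∑ i : Fin (n - 1),
            Polynomial.C (Polynomial.C
              (algebraMap (MvPolynomial (Fin (n - 1)) ℚ)
                (FractionRing (MvPolynomial (Fin (n - 1)) ℚ)) (MvPolynomial.X i)))
              * Polynomial.X ^ (n - 1 - (i : ℕ)))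
        + Polynomial.C Polynomial.X = _
    rw [f0, Polynomial.map_add, Polynomial.map_add, Polynomial.map_pow, Polynomial.map_X,
      Polynomial.map_C, ← Polynomial.coe_mapRingHom, map_sum]
    congr 1
    · congr 1
      refine Finset.sum_congr rfl fun i _ => ?_
      simp only [Polynomial.coe_mapRingHom, Polynomial.map_mul, Polynomial.map_pow,
        Polynomial.map_X, Polynomial.map_C]
    · rw [show (Polynomial.mapRingHom (algebraMap (MvPolynomial (Fin (n - 1)) ℚ) (FractionRing (MvPolynomial (Fin (n - 1)) ℚ)))) Polynomial.X
        = Polynomial.X from Polynomial.map_X _]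
  set D₀ := disc n (f0 n) with hD₀
  have hDeq : D = D₀.map (algebraMap (MvPolynomial (Fin (n - 1)) ℚ) (FractionRing (MvPolynomial (Fin (n - 1)) ℚ))) := by
    show disc n fpoly = _
    rw [hfpoly, disc_map (Polynomial.mapRingHom (algebraMap (MvPolynomial (Fin (n - 1)) ℚ) (FractionRing (MvPolynomial (Fin (n - 1)) ℚ)))) n (f0 n)]
    rfl
  have hDc : D₀.map (ρℂ n) = disc n (trinom ℂ n) := by
    rw [hD₀, ← f0_map_rho n hn, disc_map]
    rfl
  have hDcne : disc n (trinom ℂ n) ≠ 0 := fun h =>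
    eval_disc_trinom_zero n hn (by rw [h, eval_zero])
  have hD₀0 : D₀ ≠ 0 := fun h => hDcne (by rw [← hDc, h, Polynomial.map_zero])
  have halg_inj : Function.Injective (algebraMap (MvPolynomial (Fin (n - 1)) ℚ) (FractionRing (MvPolynomial (Fin (n - 1)) ℚ))) :=
    IsFractionRing.injective _ _
  have hDne : D ≠ 0 := by
    rw [hDeq]
    exact fun h => hD₀0 (Polynomial.map_injective _ halg_inj (by rw [h, Polynomial.map_zero]))
  have hres : resultant (n - 1) (n - 2) D (Polynomial.derivative D) =
      algebraMap (MvPolynomial (Fin (n - 1)) ℚ) (FractionRing (MvPolynomial (Fin (n - 1)) ℚ))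
        (resultant (n - 1) (n - 2) D₀ (Polynomial.derivative D₀)) := by
    rw [hDeq, derivative_map, resultant_map]
  have hR₀ : resultant (n - 1) (n - 2) D₀ (Polynomial.derivative D₀) ≠ 0 := by
    intro h
    apply key_complex n hn
    rw [← hDc, derivative_map, resultant_map, h, map_zero]
  apply mul_ne_zero (mul_ne_zero _ _)
  · rw [hres]
    exact fun h => hR₀ (halg_inj (by rw [h, map_zero]))
  · exact pow_ne_zero _ (neg_ne_zero.mpr one_ne_zero)
  · exact inv_ne_zero (leadingCoeff_ne_zero.mpr hDne)

end
end

section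
/- Let C be a positive squarefree integer and suppose the largest divisor A of C composed of primes greater than H^{δ/2} satisfies A ≤ H, while C > H^{1+δ}. Then C has a divisor B with H^{1+δ/2} < B ≤ H^{1+δ} and A | B. -/
open scoped Classical in
/-- If `C` is squarefree, the product `A` of the primes `p ∣ C` with `p > H^{δ/2}` satisfies
`A ≤ H`, and `C > H^{1+δ}`, then `C` has a divisor `B` with `H^{1+δ/2} < B ≤ H^{1+δ}`
and `A ∣ B`. -/
theorem stmt_18 (H : ℝ) (hH : 2 ≤ H) (δ : ℝ) (hδ0 : 0 < δ) (hδ1 : δ ≤ 1)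
    (C : ℕ) (hC0 : 0 < C) (hCsf : Squarefree C)
    (A : ℕ)
    (hA : A = ∏ p ∈ C.primeFactors.filter (fun p => H ^ (δ / 2) < (p : ℝ)), p)
    (hAH : (A : ℝ) ≤ H) (hCbig : H ^ (1 + δ) < (C : ℝ)) :
    ∃ B : ℕ, B ∣ C ∧ A ∣ B ∧ H ^ (1 + δ / 2) < (B : ℝ) ∧ (B : ℝ) ≤ H ^ (1 + δ) := by
  classical
  have hH0 : (0:ℝ) < H := by linarith
  have hH1 : (1:ℝ) ≤ H := by linarith
  set T : Finset ℕ := C.primeFactors.filter (fun p : ℕ => H ^ (δ / 2) < (p : ℝ)) with hT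
  have hA' : A = ∏ p ∈ T, p := by
    have h := hA
    rw [show (do let a ← C.primeFactors; pure ((a:ℝ)) : Finset ℝ)
          = C.primeFactors.image (fun a : ℕ => (a:ℝ)) by simp [Finset.bind_def],
        Finset.filter_image,
        Finset.prod_image (fun x _ y _ hxy => Nat.cast_injective hxy)] at h
    have h2 : (A:ℝ) = ((∏ p ∈ T, p : ℕ) : ℝ) := by
      rw [h, hT, Nat.cast_prod]
    exact_mod_cast h2
  have hAdvd : A ∣ C := by
    rw [hA']
    calc (∏ p ∈ T, p)
        ∣ ∏ p ∈ C.primeFactors, p :=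
          Finset.prod_dvd_prod_of_subset _ _ _ (Finset.filter_subset _ _)
      _ = C := Nat.prod_primeFactors_of_squarefree hCsf
  set S := C.divisors.filter (fun B => A ∣ B ∧ (B:ℝ) ≤ H ^ (1+δ)) with hS
  have hmid : H ^ (1 + δ/2) ≤ H ^ (1+δ) :=
    Real.rpow_le_rpow_of_exponent_le hH1 (by linarith)
  have hAS : A ∈ S := by
    simp only [hS, Finset.mem_filter, Nat.mem_divisors]
    refine ⟨⟨hAdvd, hC0.ne'⟩, dvd_rfl, ?_⟩
    calc (A:ℝ) ≤ H := hAH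
      _ = H ^ (1:ℝ) := (Real.rpow_one H).symm
      _ ≤ H ^ (1+δ) := Real.rpow_le_rpow_of_exponent_le hH1 (by linarith)
  obtain ⟨B, hBS, hBmax⟩ := S.exists_max_image id ⟨A, hAS⟩
  have hBS' := hBS
  simp only [hS, Finset.mem_filter, Nat.mem_divisors] at hBS'
  obtain ⟨⟨hBC, -⟩, hAB, hBle⟩ := hBS'
  have hB0 : 0 < B := Nat.pos_of_dvd_of_pos hBC hC0
  refine ⟨B, hBC, hAB, ?_, hBle⟩
  by_contra hcon
  push_neg at hcon
  -- B ≠ C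
  have hBneC : B ≠ C := by
    intro h
    rw [h] at hcon
    have := lt_of_lt_of_le hCbig (le_trans hcon hmid)
    exact absurd this (lt_irrefl _)
  set k := C / B with hk
  have hkB : B * k = C := Nat.mul_div_cancel' hBC
  have hk1 : k ≠ 1 := by
    intro h
    rw [h, mul_one] at hkB
    exact hBneC hkB
  obtain ⟨p, hp, hpk⟩ := Nat.exists_prime_and_dvd hk1
  have hpBC : p * B ∣ C := by
    rw [← hkB, mul_comm B k]
    exact mul_dvd_mul hpk dvd_rfl
  have hpC : p ∣ C := dvd_trans (dvd_mul_right p B) hpBC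
  have hpnB : ¬ p ∣ B := by
    intro hdvd
    have : p * p ∣ C := dvd_trans (mul_dvd_mul_left p hdvd) hpBC
    exact hp.not_isUnit (hCsf p this)
  have hple : (p:ℝ) ≤ H ^ (δ/2) := by
    by_contra hgt
    push_neg at hgt
    have hmem : p ∈ T := by
      simp only [hT, Finset.mem_filter, Nat.mem_primeFactors]
      exact ⟨⟨hp, hpC, hC0.ne'⟩, hgt⟩
    have : p ∣ A := by
      rw [hA']; exact Finset.dvd_prod_of_mem _ hmem
    exact hpnB (this.trans hAB)
  have hpBS : p * B ∈ S := by
    simp only [hS, Finset.mem_filter, Nat.mem_divisors]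
    refine ⟨⟨hpBC, hC0.ne'⟩, hAB.trans (dvd_mul_left B p), ?_⟩
    have : ((p * B : ℕ) : ℝ) = (p:ℝ) * (B:ℝ) := by push_cast; ring
    rw [this]
    calc (p:ℝ) * (B:ℝ) ≤ H ^ (δ/2) * H ^ (1 + δ/2) :=
          mul_le_mul hple hcon (by positivity) (by positivity)
      _ = H ^ (δ/2 + (1 + δ/2)) := (Real.rpow_add hH0 _ _).symm
      _ = H ^ (1 + δ) := by ring_nf
  have hle := hBmax (p * B) hpBS
  simp only [id] at hle
  have : B < p * B := lt_mul_of_one_lt_left hB0 hp.one_lt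
  omega
end

section
/- Let f(x) = x^n + a_1 x^{n−1} + ... + a_n be a monic polynomial over 𝔽_p that has either a root of multiplicity at least 3, or at least two distinct roots of multiplicity at least 2 (in an algebraic closure), or an irreducible factor of degree ≥ 2 appearing with multiplicity ≥ 2. Then for every monic g ≡ f (mod p) over ℤ reducing to f, p² divides Disc(g). -/
noncomputable section

open Polynomial in
lemma block_sum {R : Type*} [CommRing R] (s t : ℕ) (w P : Polynomial R)
    (hw : ∀ a, s ≤ a → w.coeff a = 0) {j : ℕ} (hj : j < t + s) :
    ∑ k ∈ Finset.range s, w.coeff (s - 1 - k) * (if j ≤ t + k then P.coeff (t + k - j) else 0)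
      = (w * P).coeff (t + s - 1 - j) := by
  set K := t + s - 1 - j with hK
  set G : ℕ → R := fun a => w.coeff a * (if a ≤ K then P.coeff (K - a) else 0) with hG
  have step1 : ∑ k ∈ Finset.range s, w.coeff (s - 1 - k) *
      (if j ≤ t + k then P.coeff (t + k - j) else 0) = ∑ k ∈ Finset.range s, G (s - 1 - k) := by
    refine Finset.sum_congr rfl fun k hk => ?_
    have hks : k < s := Finset.mem_range.mp hk
    by_cases hc : j ≤ t + k
    · rw [hG]
      have h1 : s - 1 - k ≤ K := by omega
      have h2 : K - (s - 1 - k) = t + k - j := by omega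
      simp only [if_pos hc, if_pos h1, h2]
    · have h1 : ¬ (s - 1 - k ≤ K) := by omega
      simp only [hG, if_neg hc, if_neg h1]
  rw [step1, Finset.sum_range_reflect G s]
  have step2 : ∑ a ∈ Finset.range s, G a = ∑ a ∈ Finset.range (max s (K + 1)), G a := by
    refine (Finset.sum_subset (Finset.range_subset_range.mpr (le_max_left _ _)) fun a _ ha => ?_)
    have : s ≤ a := by
      by_contra h
      exact ha (Finset.mem_range.mpr (by omega))
    simp [hG, hw a this]
  have step3 : ∑ a ∈ Finset.range (K + 1), G a = ∑ a ∈ Finset.range (max s (K + 1)), G a := by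
    refine (Finset.sum_subset (Finset.range_subset_range.mpr (le_max_right _ _)) fun a _ ha => ?_)
    have : ¬ (a ≤ K) := by
      by_contra h
      exact ha (Finset.mem_range.mpr (by omega))
    simp [hG, this]
  rw [step2, ← step3]
  rw [Polynomial.coeff_mul, Finset.Nat.sum_antidiagonal_eq_sum_range_succ_mk]
  refine Finset.sum_congr rfl fun a ha => ?_
  have : a ≤ K := by have := Finset.mem_range.mp ha; omega
  simp [hG, this]

open Polynomial Matrix in
lemma sylvester_vecMul {R : Type*} [CommRing R] (m n : ℕ) (P Q u v : Polynomial R)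
    (r : Fin (m + n) → R)
    (hr : ∀ i : Fin (m + n), r i =
      if (i : ℕ) < n then u.coeff (n - 1 - (i : ℕ)) else v.coeff (m - 1 - ((i : ℕ) - n)))
    (hu : ∀ a, n ≤ a → u.coeff a = 0) (hv : ∀ a, m ≤ a → v.coeff a = 0) (j : Fin (m + n)) :
    (r ᵥ* sylvester m n P Q) j = (u * P + v * Q).coeff (m + n - 1 - (j : ℕ)) := by
  have hj : (j : ℕ) < m + n := j.isLt
  set g : ℕ → R := fun i =>
    (if i < n then u.coeff (n - 1 - i) else v.coeff (m - 1 - (i - n))) *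
    (if i < n then (if (j : ℕ) ≤ m + i then P.coeff (m + i - (j : ℕ)) else 0)
     else (if (j : ℕ) ≤ n + (i - n) then Q.coeff (n + (i - n) - (j : ℕ)) else 0)) with hg
  have e0 : (r ᵥ* sylvester m n P Q) j = ∑ i ∈ Finset.range (m + n), g i := by
    rw [Matrix.vecMul, dotProduct, ← Fin.sum_univ_eq_sum_range]
    refine Finset.sum_congr rfl fun i _ => ?_
    rw [hr i, hg]
    rfl
  have esplit : ∑ i ∈ Finset.range (m + n), g i
      = ∑ i ∈ Finset.range n, g i + ∑ k ∈ Finset.range m, g (n + k) := by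
    have h1 : ∑ i ∈ Finset.Ico 0 n, g i + ∑ i ∈ Finset.Ico n (m + n), g i
        = ∑ i ∈ Finset.Ico 0 (m + n), g i :=
      Finset.sum_Ico_consecutive g (by omega) (by omega)
    have h2 : ∑ i ∈ Finset.Ico n (m + n), g i
        = ∑ i ∈ Finset.range (m + n - n), g (n + i) := Finset.sum_Ico_eq_sum_range g n (m + n)
    have h3 : m + n - n = m := by omega
    rw [Finset.range_eq_Ico, ← h1, h2, h3, ← Finset.range_eq_Ico]
  have e1 : ∑ i ∈ Finset.range n, g i = (u * P).coeff (m + n - 1 - (j : ℕ)) := by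
    rw [← block_sum n m u P hu (by omega : (j:ℕ) < m + n)]
    refine Finset.sum_congr rfl fun i hi => ?_
    have : i < n := Finset.mem_range.mp hi
    simp only [hg, if_pos this]
  have e2 : ∑ k ∈ Finset.range m, g (n + k) = (v * Q).coeff (m + n - 1 - (j : ℕ)) := by
    have : (m + n - 1 - (j : ℕ)) = (n + m - 1 - (j : ℕ)) := by omega
    rw [this, ← block_sum m n v Q hv (by omega : (j:ℕ) < n + m)]
    refine Finset.sum_congr rfl fun k hk => ?_
    have h1 : ¬ (n + k < n) := by omega
    simp only [hg, if_neg h1, Nat.add_sub_cancel_left]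
  rw [e0, esplit, e1, e2, Polynomial.coeff_add]

open Matrix in
lemma sq_dvd_det {N : ℕ} (M : Matrix (Fin N) (Fin N) ℤ) (q : ℤ) (r₁ r₂ : Fin N → ℤ)
    (ρ₁ ρ₂ : Fin N) (hne : ρ₁ ≠ ρ₂)
    (h11 : r₁ ρ₁ = 1) (h12 : r₁ ρ₂ = 0) (h21 : r₂ ρ₁ = 0) (h22 : r₂ ρ₂ = 1)
    (hd1 : ∀ j, q ∣ (r₁ ᵥ* M) j) (hd2 : ∀ j, q ∣ (r₂ ᵥ* M) j) :
    q ^ 2 ∣ M.det := by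
  classical
  have hvec : ∀ (r : Fin N → ℤ) (A : Matrix (Fin N) (Fin N) ℤ),
      r ᵥ* A = ∑ i, r i • A i := by
    intro r A
    funext j
    simp [Matrix.vecMul, dotProduct, Finset.sum_apply]
  set M₁ := M.updateRow ρ₁ (r₁ ᵥ* M) with hM₁
  have e1 : M₁.det = M.det := by
    rw [hM₁, hvec r₁ M, Matrix.det_updateRow_sum M ρ₁ r₁, h11, one_smul]
  have e2 : r₂ ᵥ* M₁ = r₂ ᵥ* M := by
    rw [hvec, hvec]
    refine Finset.sum_congr rfl fun i _ => ?_
    by_cases h : i = ρ₁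
    · subst h; rw [h21]; simp
    · rw [hM₁, Matrix.updateRow_ne h]
  set M₂ := M₁.updateRow ρ₂ (r₂ ᵥ* M₁) with hM₂
  have e3 : M₂.det = M₁.det := by
    rw [hM₂, hvec r₂ M₁, Matrix.det_updateRow_sum M₁ ρ₂ r₂, h22, one_smul]
  choose s₁ hs₁ using hd1
  choose s₂ hs₂ using hd2
  have hr1 : r₁ ᵥ* M = q • s₁ := by funext j; rw [hs₁ j]; simp
  have hr2 : r₂ ᵥ* M = q • s₂ := by funext j; rw [hs₂ j]; simp
  have comm : ∀ (A : Matrix (Fin N) (Fin N) ℤ) (a b : Fin N → ℤ),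
      (A.updateRow ρ₁ a).updateRow ρ₂ b = (A.updateRow ρ₂ b).updateRow ρ₁ a := by
    intro A a b
    ext i k
    rcases eq_or_ne i ρ₁ with h1 | h1 <;> rcases eq_or_ne i ρ₂ with h2 | h2
    · exact absurd (h1 ▸ h2) hne
    · subst h1
      rw [Matrix.updateRow_ne h2, Matrix.updateRow_self, Matrix.updateRow_self]
    · subst h2
      rw [Matrix.updateRow_self, Matrix.updateRow_ne h1, Matrix.updateRow_self]
    · rw [Matrix.updateRow_ne h2, Matrix.updateRow_ne h1, Matrix.updateRow_ne h1,
        Matrix.updateRow_ne h2]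
  have : M₂.det = q * (q * ((M.updateRow ρ₂ s₂).updateRow ρ₁ s₁).det) := by
    rw [hM₂, e2, hr2, Matrix.det_updateRow_smul, hM₁, hr1, comm M (q • s₁) s₂,
      Matrix.det_updateRow_smul]
  rw [← e1, ← e3, this]
  ring_nf
  exact Dvd.intro _ rfl

open Polynomial in
lemma exists_common_divisor (p : ℕ) [Fact p.Prime] (f : Polynomial (ZMod p)) (hf : f.Monic)
    (hindex :
      (∃ x : AlgebraicClosure (ZMod p),
          3 ≤ rootMultiplicity x (f.map (algebraMap (ZMod p) (AlgebraicClosure (ZMod p))))) ∨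
      (∃ x y : AlgebraicClosure (ZMod p), x ≠ y ∧
          2 ≤ rootMultiplicity x (f.map (algebraMap (ZMod p) (AlgebraicClosure (ZMod p)))) ∧
          2 ≤ rootMultiplicity y (f.map (algebraMap (ZMod p) (AlgebraicClosure (ZMod p))))) ∨
      (∃ Q : Polynomial (ZMod p), Irreducible Q ∧ 2 ≤ Q.natDegree ∧ Q ^ 2 ∣ f)) :
    ∃ B : Polynomial (ZMod p), B.Monic ∧ 2 ≤ B.natDegree ∧ B ∣ f ∧ B ∣ derivative f := by
  classical
  set γ := EuclideanDomain.gcd f (derivative f) with hγ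
  have hγf : γ ∣ f := EuclideanDomain.gcd_dvd_left _ _
  have hγf' : γ ∣ derivative f := EuclideanDomain.gcd_dvd_right _ _
  have hγ0 : γ ≠ 0 := by
    intro h
    exact hf.ne_zero (EuclideanDomain.gcd_eq_zero_iff.mp h).1
  -- degree bound
  set K := AlgebraicClosure (ZMod p)
  set φ := algebraMap (ZMod p) K with hφ
  have hinj : Function.Injective φ := φ.injective
  have hγdeg : 2 ≤ γ.natDegree := by
    have hmap : γ.map φ = EuclideanDomain.gcd (f.map φ) ((derivative f).map φ) :=
      (Polynomial.gcd_map φ).symm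
    have hnd : (γ.map φ).natDegree = γ.natDegree := natDegree_map_eq_of_injective hinj γ
    have hmap0 : γ.map φ ≠ 0 := Polynomial.map_ne_zero hγ0
    rw [← hnd]
    rcases hindex with ⟨x, hx⟩ | ⟨x, y, hxy, hx, hy⟩ | ⟨Q, hQirr, hQdeg, hQdvd⟩
    · have h3 : (X - C x) ^ 3 ∣ f.map φ :=
        (pow_dvd_pow _ hx).trans (Polynomial.pow_rootMultiplicity_dvd _ x)
      have h2f : (X - C x) ^ 2 ∣ f.map φ := (pow_dvd_pow _ (by norm_num)).trans h3
      have h2f' : (X - C x) ^ 2 ∣ (derivative f).map φ := by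
        rw [← derivative_map]
        simpa using pow_sub_one_dvd_derivative_of_pow_dvd h3
      have hdvd : (X - C x) ^ 2 ∣ γ.map φ := by
        rw [hmap]
        exact EuclideanDomain.dvd_gcd h2f h2f'
      calc (2 : ℕ) = ((X - C x) ^ 2 : Polynomial K).natDegree := by
            rw [natDegree_pow, natDegree_X_sub_C]
        _ ≤ (γ.map φ).natDegree := natDegree_le_of_dvd hdvd hmap0
    · have hdx : (X - C x) ∣ γ.map φ := by
        rw [hmap]
        refine EuclideanDomain.dvd_gcd ?_ ?_
        · exact (dvd_pow_self _ two_ne_zero).trans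
            ((pow_dvd_pow _ hx).trans (Polynomial.pow_rootMultiplicity_dvd _ x))
        · rw [← derivative_map]
          simpa using pow_sub_one_dvd_derivative_of_pow_dvd
            ((pow_dvd_pow _ hx).trans (Polynomial.pow_rootMultiplicity_dvd (f.map φ) x))
      have hdy : (X - C y) ∣ γ.map φ := by
        rw [hmap]
        refine EuclideanDomain.dvd_gcd ?_ ?_
        · exact (dvd_pow_self _ two_ne_zero).trans
            ((pow_dvd_pow _ hy).trans (Polynomial.pow_rootMultiplicity_dvd _ y))
        · rw [← derivative_map]
          simpa using pow_sub_one_dvd_derivative_of_pow_dvd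
            ((pow_dvd_pow _ hy).trans (Polynomial.pow_rootMultiplicity_dvd (f.map φ) y))
      have hcop : IsCoprime (X - C x) (X - C y) :=
        Polynomial.isCoprime_X_sub_C_of_isUnit_sub ((sub_ne_zero_of_ne hxy).isUnit)
      have hdvd : (X - C x) * (X - C y) ∣ γ.map φ := hcop.mul_dvd hdx hdy
      calc (2 : ℕ) = ((X - C x) * (X - C y) : Polynomial K).natDegree := by
            rw [natDegree_mul (X_sub_C_ne_zero x) (X_sub_C_ne_zero y), natDegree_X_sub_C,
              natDegree_X_sub_C]
        _ ≤ (γ.map φ).natDegree := natDegree_le_of_dvd hdvd hmap0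
    · have hQf : Q ∣ f := (dvd_pow_self Q two_ne_zero).trans hQdvd
      have hQf' : Q ∣ derivative f := by
        simpa using pow_sub_one_dvd_derivative_of_pow_dvd hQdvd
      have hQγ : Q ∣ γ := EuclideanDomain.dvd_gcd hQf hQf'
      rw [hnd]
      exact hQdeg.trans (natDegree_le_of_dvd hQγ hγ0)
  -- normalize
  have hlc : γ.leadingCoeff ≠ 0 := leadingCoeff_ne_zero.mpr hγ0
  refine ⟨γ * C γ.leadingCoeff⁻¹, monic_mul_leadingCoeff_inv hγ0, ?_, ?_, ?_⟩
  · rwa [natDegree_mul hγ0 (by simp [inv_ne_zero hlc] : C γ.leadingCoeff⁻¹ ≠ 0), natDegree_C,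
      add_zero]
  · exact Dvd.dvd.trans ⟨C γ.leadingCoeff, by
      rw [mul_assoc, ← C_mul, inv_mul_cancel₀ hlc, C_1, mul_one]⟩ hγf
  · exact Dvd.dvd.trans ⟨C γ.leadingCoeff, by
      rw [mul_assoc, ← C_mul, inv_mul_cancel₀ hlc, C_1, mul_one]⟩ hγf'


open Polynomial in
/-- If a monic degree-`n` polynomial `f` over `𝔽_p` has a root of multiplicity at least 3
(in an algebraic closure), or two distinct roots of multiplicity at least 2, or a repeated
irreducible factor of degree at least 2, then every monic integer polynomial `g` reducing to
`f` mod `p` has discriminant divisible by `p²`. -/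
theorem stmt_19 (p n : ℕ) [Fact p.Prime] (f : Polynomial (ZMod p))
    (hf : f.Monic) (hdeg : f.natDegree = n)
    (hindex :
      (∃ x : AlgebraicClosure (ZMod p),
          3 ≤ rootMultiplicity x (f.map (algebraMap (ZMod p) (AlgebraicClosure (ZMod p))))) ∨
      (∃ x y : AlgebraicClosure (ZMod p), x ≠ y ∧
          2 ≤ rootMultiplicity x (f.map (algebraMap (ZMod p) (AlgebraicClosure (ZMod p)))) ∧
          2 ≤ rootMultiplicity y (f.map (algebraMap (ZMod p) (AlgebraicClosure (ZMod p))))) ∨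
      (∃ Q : Polynomial (ZMod p), Irreducible Q ∧ 2 ≤ Q.natDegree ∧ Q ^ 2 ∣ f)) :
    ∀ g : Polynomial ℤ, g.Monic → g.map (Int.castRingHom (ZMod p)) = f →
      (p : ℤ) ^ 2 ∣ disc n g := by
  classical
  intro g hg hgmap
  obtain ⟨B, hBmonic, hBdeg2, hBf, hBf'⟩ := exists_common_divisor p f hf hindex
  set d := B.natDegree with hd
  have hdn : d ≤ n := hdeg ▸ natDegree_le_of_dvd hBf hf.ne_zero
  have hn2 : 2 ≤ n := le_trans hBdeg2 hdn
  obtain ⟨F, hF⟩ := hBf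
  obtain ⟨G, hG⟩ := hBf'
  have hFmonic : F.Monic := hBmonic.of_mul_monic_left (hF ▸ hf)
  have hFdeg : F.natDegree = n - d := by
    have h1 := hBmonic.natDegree_mul hFmonic
    rw [← hF, hdeg] at h1
    omega
  -- lifts over ℤ
  set φZ := Int.castRingHom (ZMod p) with hφZ
  have hsurj : Function.Surjective φZ := ZMod.intCast_surjective
  have hl : ∀ q : Polynomial (ZMod p), q ∈ Polynomial.lifts φZ := fun q =>
    (Polynomial.lifts_iff_coeff_lifts q).mpr fun k => hsurj (q.coeff k)
  obtain ⟨Ft, hFt_map, hFt_deg, hFt_monic⟩ :=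
    Polynomial.lifts_and_degree_eq_and_monic (hl F) hFmonic
  obtain ⟨Gt, hGt_map, hGt_deg⟩ := Polynomial.mem_lifts_and_degree_eq (hl G)
  have hFt_nat : Ft.natDegree = n - d := by
    rw [natDegree_eq_of_degree_eq hFt_deg, hFdeg]
  have hGt_small : ∀ a, n - 2 ≤ a → Gt.coeff a = 0 := by
    by_cases hG0 : G = 0
    · have hGt0 : Gt = 0 := by
        rw [← degree_eq_bot, hGt_deg, hG0, degree_zero]
      simp [hGt0]
    · intro a ha
      have h1 : (B * G).natDegree = d + G.natDegree := natDegree_mul hBmonic.ne_zero hG0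
      rw [← hG] at h1
      have h2 : (derivative f).natDegree ≤ n - 1 := hdeg ▸ natDegree_derivative_le f
      refine coeff_eq_zero_of_natDegree_lt ?_
      rw [natDegree_eq_of_degree_eq hGt_deg]
      omega
  set c := (X * Ft).coeff (n - d) with hc
  -- coefficients of a polynomial mapping to zero are divisible by p
  have hdvd_coeff : ∀ w : Polynomial ℤ, w.map φZ = 0 → ∀ k, (p : ℤ) ∣ w.coeff k := by
    intro w hw k
    have h0 : φZ (w.coeff k) = 0 := by
      rw [← Polynomial.coeff_map, hw, Polynomial.coeff_zero]
    exact (ZMod.intCast_zmod_eq_zero_iff_dvd _ p).mp h0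
  have hgd : (derivative g).map φZ = derivative f := by
    rw [← derivative_map, hgmap]
  set M := sylvester n (n - 1) g (derivative g) with hM
  -- main divisibility machine
  have key : ∀ u v : Polynomial ℤ, (∀ a, n - 1 ≤ a → u.coeff a = 0) →
      (∀ a, n ≤ a → v.coeff a = 0) →
      (u.map φZ) * f + (v.map φZ) * derivative f = 0 →
      ∀ j, (p : ℤ) ∣ ((Matrix.vecMul (fun i : Fin (n + (n - 1)) =>
        if (i : ℕ) < n - 1 then u.coeff (n - 1 - 1 - (i : ℕ))
        else v.coeff (n - 1 - ((i : ℕ) - (n - 1)))) M) j) := by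
    intro u v hu hv hrel j
    rw [hM, sylvester_vecMul n (n - 1) g (derivative g) u v _ (fun i => rfl) hu hv j]
    apply hdvd_coeff
    rw [Polynomial.map_add, Polynomial.map_mul, Polynomial.map_mul, hgmap, hgd, hrel]
  -- the two relations
  have hrel1 : ((-Gt).map φZ) * f + (Ft.map φZ) * derivative f = 0 := by
    rw [Polynomial.map_neg, hGt_map, hFt_map, hG, hF]
    ring
  have hrel2 : ((C c * Gt - X * Gt).map φZ) * f + ((X * Ft - C c * Ft).map φZ) * derivative f
      = 0 := by
    rw [Polynomial.map_sub, Polynomial.map_sub, Polynomial.map_mul, Polynomial.map_mul,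
      Polynomial.map_mul, Polynomial.map_mul, Polynomial.map_C, Polynomial.map_X,
      hGt_map, hFt_map, hG, hF]
    ring
  -- coefficient bounds
  have hu1 : ∀ a, n - 1 ≤ a → (-Gt).coeff a = 0 := by
    intro a ha
    rw [coeff_neg, hGt_small a (by omega), neg_zero]
  have hv1 : ∀ a, n ≤ a → Ft.coeff a = 0 := by
    intro a ha
    exact coeff_eq_zero_of_natDegree_lt (by omega)
  have hu2 : ∀ a, n - 1 ≤ a → (C c * Gt - X * Gt).coeff a = 0 := by
    intro a ha
    obtain ⟨b, rfl⟩ : ∃ b, a = b + 1 := ⟨a - 1, by omega⟩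
    rw [coeff_sub, coeff_C_mul, coeff_X_mul, hGt_small (b + 1) (by omega),
      hGt_small b (by omega)]
    ring
  have hv2 : ∀ a, n ≤ a → (X * Ft - C c * Ft).coeff a = 0 := by
    intro a ha
    obtain ⟨b, rfl⟩ : ∃ b, a = b + 1 := ⟨a - 1, by omega⟩
    rw [coeff_sub, coeff_C_mul, coeff_X_mul,
      coeff_eq_zero_of_natDegree_lt (by omega : Ft.natDegree < b + 1),
      coeff_eq_zero_of_natDegree_lt (by omega : Ft.natDegree < b)]
    ring
  -- the distinguished rows
  refine Dvd.dvd.mul_left ?_ _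
  refine sq_dvd_det M (p : ℤ)
    (fun i : Fin (n + (n - 1)) =>
      if (i : ℕ) < n - 1 then (-Gt).coeff (n - 1 - 1 - (i : ℕ))
      else Ft.coeff (n - 1 - ((i : ℕ) - (n - 1))))
    (fun i : Fin (n + (n - 1)) =>
      if (i : ℕ) < n - 1 then (C c * Gt - X * Gt).coeff (n - 1 - 1 - (i : ℕ))
      else (X * Ft - C c * Ft).coeff (n - 1 - ((i : ℕ) - (n - 1))))
    ⟨(n - 1) + (d - 1), by omega⟩ ⟨(n - 1) + (d - 2), by omega⟩
    (by simp only [ne_eq, Fin.mk.injEq]; omega)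
    ?_ ?_ ?_ ?_ (key _ _ hu1 hv1 hrel1) (key _ _ hu2 hv2 hrel2)
  · -- r₁ ρ₁ = 1
    dsimp only
    rw [if_neg (by omega)]
    rw [show n - 1 - ((n - 1) + (d - 1) - (n - 1)) = n - d by omega, ← hFt_nat]
    exact hFt_monic.coeff_natDegree
  · -- r₁ ρ₂ = 0
    dsimp only
    rw [if_neg (by omega)]
    exact coeff_eq_zero_of_natDegree_lt (by omega)
  · -- r₂ ρ₁ = 0
    dsimp only
    rw [if_neg (by omega)]
    rw [show n - 1 - ((n - 1) + (d - 1) - (n - 1)) = n - d by omega, coeff_sub, coeff_C_mul,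
      ← hc, show Ft.coeff (n - d) = 1 from hFt_nat ▸ hFt_monic.coeff_natDegree]
    ring
  · -- r₂ ρ₂ = 1
    dsimp only
    rw [if_neg (by omega)]
    rw [show n - 1 - ((n - 1) + (d - 2) - (n - 1)) = (n - d) + 1 by omega, coeff_sub,
      coeff_C_mul, coeff_X_mul,
      show Ft.coeff (n - d) = 1 from hFt_nat ▸ hFt_monic.coeff_natDegree,
      coeff_eq_zero_of_natDegree_lt (by omega : Ft.natDegree < n - d + 1)]
    ring


end
end
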